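/- Consider an instance of the MST problem under explorable uncertainty with unique T_L = T_U. Let Q be a feasible query set verifying an MST T*, let P ⊆ T_L be a path between two vertices a and b, and let e ∈ P be the edge with the highest upper limit on P. If e ∉ Q, then the unique path P̂ from a to b in T* contains e, and after querying Q the edge e has the highest upper limit on P̂. -/

import Mathlib

/-!
Common framework: the minimum spanning tree problem under explorable
uncertainty with (untrusted) predictions.
-/

open scoped BigOperators
open scoped Classical

noncomputable section

/-- An instance of the MST problem under explorable uncertainty with predictions:
a connected (multi)graph whose edges carry uncertainty intervals (open `(L,U)` for
non-trivial edges, i.e. `L < U`, and the singleton `{L}` for trivial edges, i.e. `L = U`)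
together with predicted values `pw e` lying in the intervals. -/
structure UncGraph where
  V : Type
  E : Type
  fintV : Fintype V
  fintE : Fintype E
  decV : DecidableEq V
  decE : DecidableEq E
  ends : E → Sym2 V
  conn : ∀ u v : V, Relation.ReflTransGen (fun a b => ∃ e : E, ends e = s(a, b)) u v
  L : E → ℝ
  U : E → ℝ
  LU : ∀ e, L e ≤ U e
  pw : E → ℝ
  pw_mem : ∀ e, (L e = U e ∧ pw e = L e) ∨ (L e < pw e ∧ pw e < U e)

attribute [instance] UncGraph.fintV UncGraph.fintE UncGraph.decV UncGraph.decE

namespace UncGraph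

variable (G : UncGraph)

/-- The uncertainty interval of an edge: the open interval `(L e, U e)` for a
non-trivial edge, the singleton `{L e}` for a trivial edge (`L e = U e`). -/
def I (e : G.E) : Set ℝ :=
  {x | (G.L e = G.U e ∧ x = G.L e) ∨ (G.L e < x ∧ x < G.U e)}

/-- A trivial edge: its interval is a singleton. -/
def TrivialEdge (e : G.E) : Prop := G.L e = G.U e

/-- A non-trivial edge: its interval is a nonempty open interval. -/
def NontrivialEdge (e : G.E) : Prop := G.L e < G.U e

/-- `w` is a valid realization of true edge weights. -/
def Valid (w : G.E → ℝ) : Prop := ∀ e, w e ∈ G.I e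

/-- Connectivity of two vertices using only edges from `S`. -/
def ConnectsVia (S : Finset G.E) (u v : G.V) : Prop :=
  Relation.ReflTransGen (fun a b => ∃ e ∈ S, G.ends e = s(a, b)) u v

/-- `S` is a spanning tree: it connects all vertices and has `|V| - 1` edges. -/
def IsSpanningTree (S : Finset G.E) : Prop :=
  (∀ u v : G.V, G.ConnectsVia S u v) ∧ S.card + 1 = Fintype.card G.V

/-- `T` is a minimum spanning tree with respect to the weight function `wf`. -/
def IsMST (wf : G.E → ℝ) (T : Finset G.E) : Prop :=
  G.IsSpanningTree T ∧ ∀ T', G.IsSpanningTree T' → ∑ e ∈ T, wf e ≤ ∑ e ∈ T', wf e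

/-- `wf` agrees with the true values `w` on the queried set `Q` and lies in the
uncertainty intervals elsewhere. -/
def Compatible (w : G.E → ℝ) (Q : Finset G.E) (wf : G.E → ℝ) : Prop :=
  (∀ e ∈ Q, wf e = w e) ∧ ∀ e, wf e ∈ G.I e

/-- The query set `Q` verifies `T`: `T` is an MST for every weight function
compatible with the revealed values. -/
def Verifies (w : G.E → ℝ) (Q T : Finset G.E) : Prop :=
  ∀ wf, G.Compatible w Q wf → G.IsMST wf T

/-- `Q` is a feasible query set for true values `w`. -/
def Feasible (w : G.E → ℝ) (Q : Finset G.E) : Prop :=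
  ∃ T, G.Verifies w Q T

/-- The minimum cardinality of a feasible query set. -/
def optCost (w : G.E → ℝ) : ℕ :=
  sInf {n | ∃ Q, G.Feasible w Q ∧ Q.card = n}

/-- `Q` is an optimal (minimum-cardinality feasible) query set. -/
def IsOptimal (w : G.E → ℝ) (Q : Finset G.E) : Prop :=
  G.Feasible w Q ∧ ∀ Q', G.Feasible w Q' → Q.card ≤ Q'.card

/-- An edge is mandatory if it belongs to every feasible query set. -/
def Mandatory (w : G.E → ℝ) (e : G.E) : Prop :=
  ∀ Q, G.Feasible w Q → e ∈ Q

/-- A witness set intersects every feasible query set. -/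
def IsWitnessSet (w : G.E → ℝ) (W : Finset G.E) : Prop :=
  ∀ Q, G.Feasible w Q → ∃ e ∈ W, e ∈ Q

/-- An edge is prediction mandatory if it is mandatory under the assumption that
all queries return the predicted values. -/
def PredMandatory (e : G.E) : Prop := G.Mandatory G.pw e

/-- An instance is prediction mandatory free if it has no prediction mandatory edge. -/
def PredMandatoryFree : Prop := ∀ e, ¬ G.PredMandatory e

/-- Hop-distance indicator `k_{e'}(e)`: `0` if the prediction `p e` has the same
relation to the interval `I e'` as the true value `w e` (both `≤ L e'`, both
`≥ U e'`, or both strictly inside), and `1` otherwise. -/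
def kErr (p w : G.E → ℝ) (e e' : G.E) : ℕ :=
  if (p e ≤ G.L e' ∧ w e ≤ G.L e') ∨ (G.U e' ≤ p e ∧ G.U e' ≤ w e) ∨
      (G.L e' < p e ∧ p e < G.U e' ∧ G.L e' < w e ∧ w e < G.U e')
  then 0 else 1

/-- `h→(e) = Σ_{e' ≠ e} k_{e'}(e)`. -/
def hright (p w : G.E → ℝ) (e : G.E) : ℕ :=
  ∑ e' ∈ Finset.univ.erase e, G.kErr p w e e'

/-- `h←(e) = Σ_{e' ≠ e} k_e(e')`. -/
def hleft (p w : G.E → ℝ) (e : G.E) : ℕ :=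
  ∑ e' ∈ Finset.univ.erase e, G.kErr p w e' e

/-- `h→(E') = Σ_{e ∈ E'} h→(e)`. -/
def hrightSum (p w : G.E → ℝ) (S : Finset G.E) : ℕ := ∑ e ∈ S, G.hright p w e

/-- `h←(E') = Σ_{e ∈ E'} h←(e)`. -/
def hleftSum (p w : G.E → ℝ) (S : Finset G.E) : ℕ := ∑ e ∈ S, G.hleft p w e

/-- The hop distance of prediction `p` for realization `w`. -/
def hopDist (p w : G.E → ℝ) : ℕ := ∑ e, G.hright p w e

/-- The hop distance `k_h` of the instance's predictions for realization `w`. -/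
def khop (w : G.E → ℝ) : ℕ := G.hopDist G.pw w

/-- Lower-limit weights `w^L`: `L e + ε` for non-trivial edges, the known value
for trivial edges. -/
def lowerWeight (ε : ℝ) (e : G.E) : ℝ := if G.L e = G.U e then G.L e else G.L e + ε

/-- Upper-limit weights `w^U`: `U e - ε` for non-trivial edges, the known value
for trivial edges. -/
def upperWeight (ε : ℝ) (e : G.E) : ℝ := if G.L e = G.U e then G.L e else G.U e - ε

/-- `T` is a lower limit tree: an MST for `w^L` for all sufficiently small `ε > 0`. -/
def IsLowerLimitTree (T : Finset G.E) : Prop :=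
  ∃ ε₀ > (0 : ℝ), ∀ ε : ℝ, 0 < ε → ε < ε₀ → G.IsMST (G.lowerWeight ε) T

/-- `T` is an upper limit tree: an MST for `w^U` for all sufficiently small `ε > 0`. -/
def IsUpperLimitTree (T : Finset G.E) : Prop :=
  ∃ ε₀ > (0 : ℝ), ∀ ε : ℝ, 0 < ε → ε < ε₀ → G.IsMST (G.upperWeight ε) T

/-- `T` is simultaneously the unique lower limit tree and the unique upper
limit tree (`T_L = T_U`, both unique). -/
def UniqueLimitTrees (T : Finset G.E) : Prop :=
  G.IsLowerLimitTree T ∧ G.IsUpperLimitTree T ∧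
  (∀ T', G.IsLowerLimitTree T' → T' = T) ∧
  (∀ T', G.IsUpperLimitTree T' → T' = T)

/-- Number of edge-ends of `S` incident to `v` (loops count twice). -/
def incCount (S : Finset G.E) (v : G.V) : ℕ :=
  ∑ e ∈ S, (if G.ends e = s(v, v) then 2 else if v ∈ G.ends e then 1 else 0)

/-- `S` forms a single cycle: nonempty, every vertex has degree `0` or `2`,
and the support is connected. -/
def IsCycle (S : Finset G.E) : Prop :=
  S.Nonempty ∧ (∀ v, G.incCount S v = 0 ∨ G.incCount S v = 2) ∧
  ∀ u v, G.incCount S u ≠ 0 → G.incCount S v ≠ 0 → G.ConnectsVia S u v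

/-- `C` is the cycle closed by adding the edge `f` to the tree `T`. -/
def IsCycleOf (T : Finset G.E) (f : G.E) (C : Finset G.E) : Prop :=
  G.IsCycle C ∧ f ∈ C ∧ C ⊆ insert f T

/-- `e'` lies in the cut `X_e` between the two components of `T \ {e}`. -/
def InCut (T : Finset G.E) (e e' : G.E) : Prop :=
  ∀ u v : G.V, G.ends e' = s(u, v) → ¬ G.ConnectsVia (T.erase e) u v

/-- `S` is a path between the (distinct) vertices `a` and `b`. -/
def IsPathBetween (S : Finset G.E) (a b : G.V) : Prop :=
  a ≠ b ∧ G.incCount S a = 1 ∧ G.incCount S b = 1 ∧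
  (∀ v, v ≠ a → v ≠ b → G.incCount S v = 0 ∨ G.incCount S v = 2) ∧
  ∀ v, G.incCount S v ≠ 0 → G.ConnectsVia S a v

/-- `{f, l}` is an edge of the vertex cover instance `Ḡ` (w.r.t. the tree `T`):
`f ∉ T`, `l ≠ f` lies on the cycle closed by `f`, both are non-trivial, and
their intervals intersect. -/
def VCEdge (T : Finset G.E) (f l : G.E) : Prop :=
  f ∉ T ∧ l ≠ f ∧ G.NontrivialEdge f ∧ G.NontrivialEdge l ∧
  (∃ C, G.IsCycleOf T f C ∧ l ∈ C) ∧ (G.I f ∩ G.I l).Nonempty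

/-- Adjacency in the vertex cover instance `Ḡ` (symmetrized). -/
def VCAdj (T : Finset G.E) (a b : G.E) : Prop := G.VCEdge T a b ∨ G.VCEdge T b a

/-- `S` is a vertex cover of the vertex cover instance `Ḡ`. -/
def IsVCCover (T S : Finset G.E) : Prop :=
  ∀ a b, G.VCAdj T a b → a ∈ S ∨ b ∈ S

/-- `S` is a minimum vertex cover of the vertex cover instance `Ḡ`. -/
def IsMinVC (T S : Finset G.E) : Prop :=
  G.IsVCCover T S ∧ ∀ S', G.IsVCCover T S' → S.card ≤ S'.card

/-- Edge `e` does not occur in the instance anymore: independently of the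
remaining uncertainty it can be deleted (some MST avoids it, for every
realization) or contracted (some MST contains it, for every realization). -/
def Removable (e : G.E) : Prop :=
  (∀ wf : G.E → ℝ, (∀ e', wf e' ∈ G.I e') → ∃ T, G.IsMST wf T ∧ e ∉ T) ∨
  (∀ wf : G.E → ℝ, (∀ e', wf e' ∈ G.I e') → ∃ T, G.IsMST wf T ∧ e ∈ T)

end UncGraph

/-- The instance obtained from `G` by querying the edges of `Q` under true
values `w`: the intervals of queried edges collapse to the revealed values. -/
def UncGraph.restrict (G : UncGraph) (w : G.E → ℝ) (Q : Finset G.E) : UncGraph where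
  V := G.V
  E := G.E
  fintV := G.fintV
  fintE := G.fintE
  decV := G.decV
  decE := G.decE
  ends := G.ends
  conn := G.conn
  L := fun e => if e ∈ Q then w e else G.L e
  U := fun e => if e ∈ Q then w e else G.U e
  LU := fun e => by by_cases h : e ∈ Q <;> simp [h, G.LU e]
  pw := fun e => if e ∈ Q then w e else G.pw e
  pw_mem := fun e => by
    by_cases h : e ∈ Q
    · simp [h]
    · simpa [h] using G.pw_mem e

/-- A deterministic adaptive query algorithm: given the instance and the set of
already queried edges together with the revealed values, it either picks the next
edge to query or stops (`none`).  The lawfulness condition states that the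
decision may only depend on the revealed values of already queried edges. -/
structure Algorithm where
  next : ∀ G : UncGraph, Finset G.E → (G.E → ℝ) → Option G.E
  lawful : ∀ (G : UncGraph) (Q : Finset G.E) (w w' : G.E → ℝ),
    (∀ e ∈ Q, w e = w' e) → next G Q w = next G Q w'

namespace Algorithm

/-- The set of edges queried by `A` after `n` steps, on instance `G` with true
values `w`; the algorithm stops as soon as the queried set is feasible. -/
def runQueries (A : Algorithm) (G : UncGraph) (w : G.E → ℝ) : ℕ → Finset G.E
  | 0 => ∅
  | n + 1 =>
    let Q := A.runQueries G w n
    if G.Feasible w Q then Q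
    else
      match A.next G Q w with
      | some e => insert e Q
      | none => Q

/-- The final query set of the run of `A`. -/
def finalQueries (A : Algorithm) (G : UncGraph) (w : G.E → ℝ) : Finset G.E :=
  A.runQueries G w (Fintype.card G.E + 1)

/-- The number of queries made by `A` on instance `G` with true values `w`. -/
def algCost (A : Algorithm) (G : UncGraph) (w : G.E → ℝ) : ℕ :=
  (A.finalQueries G w).card

/-- `A` solves every instance: it always ends with a feasible query set. -/
def Solves (A : Algorithm) : Prop :=
  ∀ (G : UncGraph) (w : G.E → ℝ), G.Valid w → G.Feasible w (A.finalQueries G w)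

/-- `A` is `α`-consistent: on instances with correct predictions it makes at
most `α · |OPT|` queries. -/
def Consistent (A : Algorithm) (α : ℝ) : Prop :=
  ∀ G : UncGraph, (A.algCost G G.pw : ℝ) ≤ α * (G.optCost G.pw : ℝ)

/-- `A` is `β`-robust: it makes at most `β · |OPT|` queries on every instance. -/
def Robust (A : Algorithm) (β : ℝ) : Prop :=
  ∀ (G : UncGraph) (w : G.E → ℝ), G.Valid w → (A.algCost G w : ℝ) ≤ β * (G.optCost w : ℝ)

/-- Run of a preprocessing algorithm: it stops exactly when `next` returns
`none` (rather than when the queried set is feasible). -/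
def runPre (A : Algorithm) (G : UncGraph) (w : G.E → ℝ) : ℕ → Finset G.E
  | 0 => ∅
  | n + 1 =>
    let Q := A.runPre G w n
    match A.next G Q w with
    | some e => insert e Q
    | none => Q

/-- The final query set of a preprocessing run of `A`. -/
def preQueries (A : Algorithm) (G : UncGraph) (w : G.E → ℝ) : Finset G.E :=
  A.runPre G w (Fintype.card G.E + 1)

end Algorithm

/-!
Write `L'`, `U'` for the limits after querying `Q`. An edge `x ∈ T_L` with `L' x = L x` (unqueried
or trivial) lies in `T*`: otherwise some `h ∈ T*` and `x` cross each other's cuts, the exchange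
argument for the unique `T_L` gives `L x ≤ L h`, strictly if `h` is trivial, and verification of
`T*` gives `U' h ≤ L x`, which forces `h` to be trivial. So `e ∈ T*`. If `e ∉ P̂`, then `P̂` and
`P - e` join the ends of `e` avoiding `e`, so some `y ∈ P - e` crosses the cut of `e` in `T*`;
verification gives `U e ≤ L' y ≤ U y ≤ U e`, so `y` is trivial and lies in `T*`, which is
impossible. Finally, for `e' ∈ P̂` some `g ∈ P` crosses the cut of `e'` in `T*`, and verification
gives `U' e' ≤ L' g ≤ U g ≤ U e` (or `g = e'`).
-/

namespace UncGraph

variable {G : UncGraph}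

section Connectivity

theorem exists_ends_eq (g : G.E) : ∃ u v, G.ends g = s(u, v) :=
  Sym2.exists.mp ⟨G.ends g, rfl⟩

theorem ConnectsVia.refl (S : Finset G.E) (u : G.V) : G.ConnectsVia S u u :=
  Relation.ReflTransGen.refl

theorem ConnectsVia.mono {S S' : Finset G.E} (h : S ⊆ S') {u v : G.V}
    (huv : G.ConnectsVia S u v) : G.ConnectsVia S' u v :=
  Relation.ReflTransGen.mono (fun _ _ ⟨g, hg, hends⟩ => ⟨g, h hg, hends⟩) _ _ huv

theorem ConnectsVia.symm {S : Finset G.E} {u v : G.V} (huv : G.ConnectsVia S u v) :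
    G.ConnectsVia S v u :=
  Relation.ReflTransGen.mono (fun _ _ ⟨g, hg, hends⟩ => ⟨g, hg, hends.trans Sym2.eq_swap⟩) _ _
    (Relation.ReflTransGen.swap _ _ huv)

theorem ConnectsVia.trans {S : Finset G.E} {u v x : G.V} (huv : G.ConnectsVia S u v)
    (hvx : G.ConnectsVia S v x) : G.ConnectsVia S u x :=
  Relation.ReflTransGen.trans huv hvx

theorem connectsVia_of_mem {S : Finset G.E} {g : G.E} (hg : g ∈ S) {u v : G.V}
    (hends : G.ends g = s(u, v)) : G.ConnectsVia S u v :=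
  Relation.ReflTransGen.single ⟨g, hg, hends⟩

theorem inCut_iff_of_ends {T : Finset G.E} {r g : G.E} {u v : G.V}
    (hends : G.ends g = s(u, v)) : G.InCut T r g ↔ ¬ G.ConnectsVia (T.erase r) u v := by
  refine ⟨fun hcut => hcut u v hends, fun hsep u' v' hends' hconn => hsep ?_⟩
  rw [hends, Sym2.eq_iff] at hends'
  rcases hends' with ⟨rfl, rfl⟩ | ⟨rfl, rfl⟩
  · exact hconn
  · exact hconn.symm

theorem ConnectsVia.of_forall_ends {S S' : Finset G.E} {p q : G.V}
    (h : ∀ g ∈ S, ∀ u v, G.ends g = s(u, v) → G.ConnectsVia S' u v)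
    (hpq : G.ConnectsVia S p q) : G.ConnectsVia S' p q := by
  induction hpq with
  | refl => exact ConnectsVia.refl _ _
  | tail _ hstep ih =>
    obtain ⟨g, hg, hends⟩ := hstep
    exact ih.trans (h g hg _ _ hends)

theorem ConnectsVia.exists_mem_inCut {S T : Finset G.E} {r : G.E} {p q : G.V}
    (hpq : G.ConnectsVia S p q) (hsep : ¬ G.ConnectsVia (T.erase r) p q) :
    ∃ g ∈ S, G.InCut T r g := by
  by_contra! h
  exact hsep (hpq.of_forall_ends fun g hg u v hends =>
    not_not.mp fun huv => h g hg ((inCut_iff_of_ends hends).mpr huv))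

theorem InCut.notMem_erase {T : Finset G.E} {r g : G.E} (hcut : G.InCut T r g) :
    g ∉ T.erase r := fun hg => by
  obtain ⟨u, v, hends⟩ := exists_ends_eq g
  exact hcut u v hends (connectsVia_of_mem hg hends)

theorem ConnectsVia.insert_cases {S : Finset G.E} {r : G.E} {u v p q : G.V}
    (hends : G.ends r = s(u, v)) (hpq : G.ConnectsVia (insert r S) p q) :
    G.ConnectsVia S p q ∨ (G.ConnectsVia S p u ∧ G.ConnectsVia S v q) ∨
      (G.ConnectsVia S p v ∧ G.ConnectsVia S u q) := by
  induction hpq with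
  | refl => exact Or.inl (ConnectsVia.refl _ _)
  | @tail x y _ hstep ih =>
    obtain ⟨g, hg, hg_ends⟩ := hstep
    rcases Finset.mem_insert.mp hg with rfl | hgS
    · rw [hends, Sym2.eq_iff] at hg_ends
      rcases hg_ends with ⟨rfl, rfl⟩ | ⟨rfl, rfl⟩ <;>
        rcases ih with h | ⟨h, -⟩ | ⟨h, -⟩ <;> simp [h, ConnectsVia.refl]
    · have hstep : G.ConnectsVia S x y := connectsVia_of_mem hgS hg_ends
      rcases ih with h | ⟨h, h'⟩ | ⟨h, h'⟩
      · exact Or.inl (h.trans hstep)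
      · exact Or.inr (Or.inl ⟨h, h'.trans hstep⟩)
      · exact Or.inr (Or.inr ⟨h, h'.trans hstep⟩)

theorem ConnectsVia.of_insert {S S' : Finset G.E} {r : G.E} {u v p q : G.V}
    (hpq : G.ConnectsVia (insert r S) p q) (hends : G.ends r = s(u, v))
    (huv : G.ConnectsVia S' u v) (hS : S ⊆ S') : G.ConnectsVia S' p q := by
  rcases hpq.insert_cases hends with h | ⟨hpu, hvq⟩ | ⟨hpv, huq⟩
  · exact h.mono hS
  · exact (hpu.mono hS).trans (huv.trans (hvq.mono hS))
  · exact (hpv.mono hS).trans (huv.symm.trans (huq.mono hS))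

theorem ConnectsVia.connectsVia_ends_of_not_connectsVia_erase {M S : Finset G.E} {e : G.E}
    {u v p q : G.V} (hM : G.ConnectsVia M p q) (he : e ∈ M) (hends : G.ends e = s(u, v))
    (hsep : ¬ G.ConnectsVia (M.erase e) p q) (hS : M.erase e ⊆ S)
    (hpq : G.ConnectsVia S p q) : G.ConnectsVia S u v := by
  rw [← Finset.insert_erase he] at hM
  rcases hM.insert_cases hends with h | ⟨hpu, hvq⟩ | ⟨hpv, huq⟩
  · exact absurd h hsep
  · exact (hpu.mono hS).symm.trans (hpq.trans (hvq.mono hS).symm)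
  · exact (huq.mono hS).trans (hpq.symm.trans (hpv.mono hS))

end Connectivity

section SpanningTree

theorem card_le_card_add_one_of_connectsVia {S : Finset G.E}
    (hS : ∀ u v, G.ConnectsVia S u v) : Fintype.card G.V ≤ S.card + 1 := by
  let Γ := SimpleGraph.fromEdgeSet (↑(S.image G.ends) : Set (Sym2 G.V))
  have hreach : ∀ u v, Γ.Reachable u v := by
    intro u v
    induction hS u v with
    | refl => rfl
    | @tail x y _ hstep ih =>
      obtain ⟨g, hg, hends⟩ := hstep
      by_cases hxy : x = y
      · exact hxy ▸ ih
      · exact ih.trans (SimpleGraph.Adj.reachable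
          (by simpa [Γ, hxy] using ⟨g, hg, hends⟩))
  rcases isEmpty_or_nonempty G.V with hV | hV
  · simp
  have hcard := (SimpleGraph.Connected.mk hreach).card_vert_le_card_edgeSet_add_one
  have hedges : Nat.card Γ.edgeSet ≤ S.card := by
    calc Nat.card Γ.edgeSet ≤ Nat.card (↑(S.image G.ends) : Set (Sym2 G.V)) :=
          Nat.card_mono (Finset.finite_toSet _) (by simp [Γ])
      _ = (S.image G.ends).card := Nat.card_coe_set_eq _ |>.trans (Set.ncard_coe_finset _)
      _ ≤ S.card := Finset.card_image_le
  rw [Nat.card_eq_fintype_card] at hcard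
  omega

theorem IsSpanningTree.inCut_self {T : Finset G.E} (hT : G.IsSpanningTree T) {r : G.E}
    (hr : r ∈ T) : G.InCut T r r := by
  obtain ⟨u, v, hends⟩ := exists_ends_eq r
  refine (inCut_iff_of_ends hends).mpr fun huv => ?_
  have hspan : ∀ x y, G.ConnectsVia (T.erase r) x y := fun x y =>
    ((Finset.insert_erase hr).symm ▸ hT.1 x y).of_insert hends huv subset_rfl
  have hcard := card_le_card_add_one_of_connectsVia hspan
  rw [Finset.card_erase_add_one hr] at hcard
  have := hT.2
  omega

theorem IsSpanningTree.insert_erase {T : Finset G.E} (hT : G.IsSpanningTree T) {r x : G.E}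
    (hr : r ∈ T) (hcut : G.InCut T r x) : G.IsSpanningTree (insert x (T.erase r)) := by
  obtain ⟨u, v, hr_ends⟩ := exists_ends_eq r
  obtain ⟨p, q, hx_ends⟩ := exists_ends_eq x
  have hsub : T.erase r ⊆ insert x (T.erase r) := Finset.subset_insert _ _
  have hpq : G.ConnectsVia (insert x (T.erase r)) p q :=
    connectsVia_of_mem (Finset.mem_insert_self _ _) hx_ends
  have huv : G.ConnectsVia (insert x (T.erase r)) u v :=
    (hT.1 p q).connectsVia_ends_of_not_connectsVia_erase hr hr_ends
      ((inCut_iff_of_ends hx_ends).mp hcut) hsub hpq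
  refine ⟨fun y z => ((Finset.insert_erase hr).symm ▸ hT.1 y z).of_insert hr_ends huv hsub, ?_⟩
  rw [Finset.card_insert_of_notMem hcut.notMem_erase, Finset.card_erase_add_one hr]
  exact hT.2

theorem IsSpanningTree.exists_inCut_inCut {T₁ T₂ : Finset G.E} (hT₁ : G.IsSpanningTree T₁)
    (hT₂ : G.IsSpanningTree T₂) {x : G.E} (hx₁ : x ∈ T₁) (hx₂ : x ∉ T₂) :
    ∃ h ∈ T₂, h ≠ x ∧ G.InCut T₁ x h ∧ G.InCut T₂ h x := by
  obtain ⟨p, q, hx_ends⟩ := exists_ends_eq x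
  -- `M` is the path in `T₂` closing a cycle with `x`
  obtain ⟨M, hMT₂, hM, hMmin⟩ :=
    exists_minimal_le_of_wellFoundedLT (fun M => G.ConnectsVia M p q) T₂ (hT₂.1 p q)
  obtain ⟨h, hhM, hcut⟩ :=
    hM.exists_mem_inCut ((inCut_iff_of_ends hx_ends).mp (hT₁.inCut_self hx₁))
  have hhT₂ : h ∈ T₂ := hMT₂ hhM
  refine ⟨h, hhT₂, fun hhx => hx₂ (hhx ▸ hhT₂), hcut, (inCut_iff_of_ends hx_ends).mpr ?_⟩
  intro hpq
  obtain ⟨u, v, hh_ends⟩ := exists_ends_eq h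
  have hsep : ¬ G.ConnectsVia (M.erase h) p q := fun hpq' =>
    Finset.notMem_erase h M (hMmin hpq' (Finset.erase_subset h M) hhM)
  exact (inCut_iff_of_ends hh_ends).mp (hT₂.inCut_self hhT₂)
    (hM.connectsVia_ends_of_not_connectsVia_erase hhM hh_ends hsep
      (Finset.erase_subset_erase h hMT₂) hpq)

end SpanningTree

section Paths

theorem incCount_eq_sum_singleton (S : Finset G.E) (x : G.V) :
    G.incCount S x = ∑ g ∈ S, G.incCount {g} x := by
  simp [incCount]

theorem incCount_erase_add {S : Finset G.E} {g : G.E} (hg : g ∈ S) (x : G.V) :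
    G.incCount (S.erase g) x + G.incCount {g} x = G.incCount S x := by
  simp only [incCount, Finset.sum_singleton]
  exact Finset.sum_erase_add _ _ hg

theorem sum_incCount_singleton_of_ne {g : G.E} {u v : G.V} (hends : G.ends g = s(u, v))
    (huv : u ≠ v) (K : Finset G.V) :
    ∑ x ∈ K, G.incCount {g} x = (if u ∈ K then 1 else 0) + (if v ∈ K then 1 else 0) := by
  have hx : ∀ x, G.incCount {g} x = (if u = x then 1 else 0) + (if v = x then 1 else 0) := by
    intro x
    simp only [incCount, Finset.sum_singleton, hends, Sym2.eq_iff, Sym2.mem_iff]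
    grind
  simp [hx, Finset.sum_add_distrib]

theorem sum_incCount_singleton_of_eq {g : G.E} {u : G.V} (hends : G.ends g = s(u, u))
    (K : Finset G.V) : ∑ x ∈ K, G.incCount {g} x = if u ∈ K then 2 else 0 := by
  have hx : ∀ x, G.incCount {g} x = if u = x then 2 else 0 := by
    intro x
    simp only [incCount, Finset.sum_singleton, hends, Sym2.eq_iff, Sym2.mem_iff]
    grind
  simp [hx]

theorem even_sum_incCount_of_closed {S : Finset G.E} {K : Finset G.V}
    (hK : ∀ g ∈ S, ∀ x y, G.ends g = s(x, y) → (x ∈ K ↔ y ∈ K)) :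
    Even (∑ x ∈ K, G.incCount S x) := by
  simp_rw [incCount_eq_sum_singleton S]
  rw [Finset.sum_comm]
  refine Finset.even_sum _ fun g hg => ?_
  obtain ⟨u, v, hends⟩ := exists_ends_eq g
  by_cases huv : u = v
  · subst huv
    rw [sum_incCount_singleton_of_eq hends]
    split_ifs <;> decide
  · rw [sum_incCount_singleton_of_ne hends huv]
    have := hK g hg u v hends
    split_ifs <;> first | decide | simp_all

theorem IsPathBetween.connectsVia {P : Finset G.E} {a b : G.V} (hP : G.IsPathBetween P a b) :
    G.ConnectsVia P a b :=
  hP.2.2.2.2 b (by rw [hP.2.2.1]; exact one_ne_zero)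

theorem IsPathBetween.even_sum_incCount {P : Finset G.E} {a b : G.V}
    (hP : G.IsPathBetween P a b) {K : Finset G.V} (hK : a ∈ K ↔ b ∈ K) :
    Even (∑ x ∈ K, G.incCount P x) := by
  obtain ⟨hab, ha, hb, hmid, -⟩ := hP
  have hdeg : ∀ x ∈ K,
      Even (G.incCount P x + ((if x = a then 1 else 0) + (if x = b then 1 else 0))) := by
    intro x _
    by_cases hxa : x = a
    · subst hxa; simp [ha, hab]
    by_cases hxb : x = b
    · subst hxb; simp [hb, hxa]
    rcases hmid x hxa hxb with h | h <;> simp [h, hxa, hxb]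
  have hsum := Finset.even_sum _ hdeg
  rw [Finset.sum_add_distrib, Finset.sum_add_distrib, Finset.sum_ite_eq', Finset.sum_ite_eq']
    at hsum
  refine (Nat.even_add.mp hsum).mpr ?_
  split_ifs <;> first | decide | simp_all

/-- Parity: the component `K` of `v` in `P - e` gets exactly one end of `e`, so its total
`P`-degree is odd; but if it contained both or neither of `a`, `b` that total would be even. -/
theorem IsPathBetween.not_connectsVia_erase {P : Finset G.E} {a b : G.V}
    (hP : G.IsPathBetween P a b) {e : G.E} (he : e ∈ P) {u v : G.V}
    (hends : G.ends e = s(u, v)) (hsep : ¬ G.ConnectsVia (P.erase e) u v) :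
    ¬ G.ConnectsVia (P.erase e) a b := by
  intro hab
  let K := Finset.univ.filter (G.ConnectsVia (P.erase e) v)
  have hmemK : ∀ x, x ∈ K ↔ G.ConnectsVia (P.erase e) v x := by simp [K]
  have hK : ∀ g ∈ P.erase e, ∀ x y, G.ends g = s(x, y) → (x ∈ K ↔ y ∈ K) := by
    intro g hg x y hends_g
    have hxy := connectsVia_of_mem hg hends_g
    simp only [hmemK]
    exact ⟨fun h => h.trans hxy, fun h => h.trans hxy.symm⟩
  have huK : u ∉ K := fun h => hsep ((hmemK u).mp h).symm
  have hvK : v ∈ K := (hmemK v).mpr (ConnectsVia.refl _ v)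
  have huv : u ≠ v := fun h => hsep (h ▸ ConnectsVia.refl _ u)
  have hsplit : ∑ x ∈ K, G.incCount P x = ∑ x ∈ K, G.incCount (P.erase e) x + 1 := by
    rw [← Finset.sum_congr rfl fun x _ => incCount_erase_add he x, Finset.sum_add_distrib,
      sum_incCount_singleton_of_ne hends huv, if_neg huK, if_pos hvK]
  have hodd : ¬ Even (∑ x ∈ K, G.incCount P x) := by
    rw [hsplit, Nat.even_add_one, not_not]
    exact even_sum_incCount_of_closed hK
  exact hodd (hP.even_sum_incCount (by simp only [hmemK]; exact ⟨fun h => h.trans hab,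
    fun h => h.trans hab.symm⟩))

theorem IsPathBetween.not_connectsVia_erase_of_subset {P T : Finset G.E} {a b : G.V}
    (hP : G.IsPathBetween P a b) (hT : G.IsSpanningTree T) (hPT : P ⊆ T) {e : G.E}
    (he : e ∈ P) : ¬ G.ConnectsVia (T.erase e) a b := by
  obtain ⟨u, v, hends⟩ := exists_ends_eq e
  have hsep : ¬ G.ConnectsVia (T.erase e) u v :=
    (inCut_iff_of_ends hends).mp (hT.inCut_self (hPT he))
  have hsub : P.erase e ⊆ T.erase e := Finset.erase_subset_erase e hPT
  exact fun hab => hsep (hP.connectsVia.connectsVia_ends_of_not_connectsVia_erase he hends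
    (hP.not_connectsVia_erase he hends fun h => hsep (h.mono hsub)) hsub hab)

end Paths

section LowerLimitTree

theorem sum_insert_erase {T : Finset G.E} {r x : G.E} (hr : r ∈ T) (hx : x ∉ T.erase r)
    (wf : G.E → ℝ) : ∑ g ∈ insert x (T.erase r), wf g = ∑ g ∈ T, wf g - wf r + wf x := by
  rw [Finset.sum_insert hx, ← Finset.sum_erase_add T wf hr]
  ring

theorem IsMST.le_of_inCut {wf : G.E → ℝ} {T : Finset G.E} (hT : G.IsMST wf T) {r x : G.E}
    (hr : r ∈ T) (hcut : G.InCut T r x) : wf r ≤ wf x := by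
  have := hT.2 _ (hT.1.insert_erase hr hcut)
  rw [sum_insert_erase hr hcut.notMem_erase] at this
  linarith

theorem IsLowerLimitTree.isSpanningTree {T : Finset G.E} (hT : G.IsLowerLimitTree T) :
    G.IsSpanningTree T := by
  obtain ⟨ε₀, hε₀, hmst⟩ := hT
  exact (hmst (ε₀ / 2) (by linarith) (by linarith)).1

theorem L_le_lowerWeight {ε : ℝ} (hε : 0 ≤ ε) (e : G.E) : G.L e ≤ G.lowerWeight ε e := by
  unfold lowerWeight
  split_ifs <;> linarith

theorem lowerWeight_le_add {ε : ℝ} (hε : 0 ≤ ε) (e : G.E) : G.lowerWeight ε e ≤ G.L e + ε := by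
  unfold lowerWeight
  split_ifs <;> linarith

theorem lowerWeight_of_trivialEdge {e : G.E} (he : G.TrivialEdge e) (ε : ℝ) :
    G.lowerWeight ε e = G.L e :=
  if_pos he

theorem IsLowerLimitTree.L_le_of_inCut {T : Finset G.E} (hT : G.IsLowerLimitTree T)
    {r x : G.E} (hr : r ∈ T) (hcut : G.InCut T r x) : G.L r ≤ G.L x := by
  obtain ⟨ε₀, hε₀, hmst⟩ := hT
  refine le_of_forall_pos_le_add fun ε hε => ?_
  have hδ : 0 < min ε (ε₀ / 2) := lt_min hε (by linarith)
  have hδ' : min ε (ε₀ / 2) < ε₀ := (min_le_right _ _).trans_lt (by linarith)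
  calc G.L r ≤ G.lowerWeight (min ε (ε₀ / 2)) r := L_le_lowerWeight hδ.le r
    _ ≤ G.lowerWeight (min ε (ε₀ / 2)) x := (hmst _ hδ hδ').le_of_inCut hr hcut
    _ ≤ G.L x + min ε (ε₀ / 2) := lowerWeight_le_add hδ.le x
    _ ≤ G.L x + ε := by gcongr; exact min_le_left _ _

/-- Otherwise exchanging `r` for the trivial edge `x` costs nothing for every small `ε`, giving a
second lower limit tree. -/
theorem IsLowerLimitTree.L_lt_of_inCut {T : Finset G.E} (hT : G.IsLowerLimitTree T)
    (huniq : ∀ T', G.IsLowerLimitTree T' → T' = T) {r x : G.E} (hr : r ∈ T) (hxr : x ≠ r)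
    (hcut : G.InCut T r x) (hx : G.TrivialEdge x) : G.L r < G.L x := by
  by_contra! hle
  obtain ⟨ε₀, hε₀, hmst⟩ := hT
  have hx_erase := hcut.notMem_erase
  have hT' : G.IsLowerLimitTree (insert x (T.erase r)) := by
    refine ⟨ε₀, hε₀, fun ε hε hεε₀ => ⟨(hmst ε hε hεε₀).1.insert_erase hr hcut,
      fun T'' hT'' => ?_⟩⟩
    have hxr_weight : G.lowerWeight ε x ≤ G.lowerWeight ε r := by
      rw [lowerWeight_of_trivialEdge hx]
      exact hle.trans (L_le_lowerWeight hε.le r)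
    rw [sum_insert_erase hr hx_erase]
    linarith [(hmst ε hε hεε₀).2 T'' hT'']
  have hxT : x ∈ T := huniq _ hT' ▸ Finset.mem_insert_self x _
  exact hx_erase (Finset.mem_erase.mpr ⟨hxr, hxT⟩)

end LowerLimitTree

section Intervals

variable {e : G.E} {x : ℝ}

theorem L_le_of_mem_I (hx : x ∈ G.I e) : G.L e ≤ x := by
  rcases hx with ⟨-, rfl⟩ | ⟨h, -⟩ <;> linarith

theorem le_U_of_mem_I (hx : x ∈ G.I e) : x ≤ G.U e := by
  rcases hx with ⟨h, rfl⟩ | ⟨-, h⟩ <;> linarith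

theorem trivialEdge_of_mem_I_of_le_L (hx : x ∈ G.I e) (hxL : x ≤ G.L e) : G.TrivialEdge e := by
  rcases hx with ⟨h, -⟩ | ⟨h, -⟩
  · exact h
  · linarith

theorem trivialEdge_of_mem_I_of_U_le (hx : x ∈ G.I e) (hUx : G.U e ≤ x) : G.TrivialEdge e := by
  rcases hx with ⟨h, -⟩ | ⟨-, h⟩
  · exact h
  · linarith

theorem eq_L_of_mem_I_of_trivialEdge (hx : x ∈ G.I e) (he : G.TrivialEdge e) : x = G.L e := by
  rcases hx with ⟨-, h⟩ | ⟨h₁, h₂⟩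
  · exact h
  · exact absurd he (by unfold TrivialEdge; linarith)

theorem exists_mem_I_gt {m : ℝ} (hm : m < G.U e) : ∃ t ∈ G.I e, m < t := by
  by_cases he : G.L e = G.U e
  · exact ⟨G.L e, Or.inl ⟨he, rfl⟩, he ▸ hm⟩
  · obtain ⟨t, ht₁, ht₂⟩ := exists_between (max_lt (lt_of_le_of_ne (G.LU e) he) hm)
    exact ⟨t, Or.inr ⟨(le_max_left _ _).trans_lt ht₁, ht₂⟩, (le_max_right _ _).trans_lt ht₁⟩

theorem exists_mem_I_lt {m : ℝ} (hm : G.L e < m) : ∃ t ∈ G.I e, t < m := by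
  by_cases he : G.L e = G.U e
  · exact ⟨G.L e, Or.inl ⟨he, rfl⟩, hm⟩
  · obtain ⟨t, ht₁, ht₂⟩ := exists_between (lt_min (lt_of_le_of_ne (G.LU e) he) hm)
    exact ⟨t, Or.inr ⟨ht₁, ht₂.trans_le (min_le_left _ _)⟩, ht₂.trans_le (min_le_right _ _)⟩

theorem valid_pw : G.Valid G.pw := G.pw_mem

end Intervals

section Restrict

variable {w : G.E → ℝ} {Q : Finset G.E} {e : G.E}

theorem restrict_L_of_mem (he : e ∈ Q) : (G.restrict w Q).L e = w e := if_pos he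

theorem restrict_U_of_mem (he : e ∈ Q) : (G.restrict w Q).U e = w e := if_pos he

theorem restrict_L_of_notMem (he : e ∉ Q) : (G.restrict w Q).L e = G.L e := if_neg he

theorem restrict_U_of_notMem (he : e ∉ Q) : (G.restrict w Q).U e = G.U e := if_neg he

theorem eq_of_mem_restrict_I {x : ℝ} (he : e ∈ Q) (hx : x ∈ (G.restrict w Q).I e) : x = w e := by
  rcases hx with ⟨-, h⟩ | ⟨h₁, h₂⟩
  · exact h.trans (restrict_L_of_mem he)
  · rw [restrict_L_of_mem he] at h₁
    rw [restrict_U_of_mem he] at h₂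
    linarith

theorem restrict_I_of_notMem (he : e ∉ Q) : (G.restrict w Q).I e = G.I e := by
  simp [I, restrict_L_of_notMem he, restrict_U_of_notMem he]

theorem L_le_restrict_L (hw : G.Valid w) : G.L e ≤ (G.restrict w Q).L e := by
  by_cases he : e ∈ Q
  · exact (L_le_of_mem_I (hw e)).trans_eq (restrict_L_of_mem he).symm
  · exact (restrict_L_of_notMem he).ge

theorem restrict_U_le_U (hw : G.Valid w) : (G.restrict w Q).U e ≤ G.U e := by
  by_cases he : e ∈ Q
  · exact (restrict_U_of_mem he).trans_le (le_U_of_mem_I (hw e))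
  · exact (restrict_U_of_notMem he).le

theorem trivialEdge_of_restrict_U_le_L (hw : G.Valid w) (h : (G.restrict w Q).U e ≤ G.L e) :
    G.TrivialEdge e := by
  by_cases he : e ∈ Q
  · exact trivialEdge_of_mem_I_of_le_L (hw e) ((restrict_U_of_mem he).symm.trans_le h)
  · exact le_antisymm (G.LU e) ((restrict_U_of_notMem he).symm.trans_le h)

theorem trivialEdge_of_U_le_restrict_L (hw : G.Valid w) (h : G.U e ≤ (G.restrict w Q).L e) :
    G.TrivialEdge e := by
  by_cases he : e ∈ Q
  · exact trivialEdge_of_mem_I_of_U_le (hw e) (h.trans_eq (restrict_L_of_mem he))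
  · exact le_antisymm (G.LU e) (h.trans_eq (restrict_L_of_notMem he))

theorem restrict_L_of_trivialEdge (hw : G.Valid w) (he : G.TrivialEdge e) :
    (G.restrict w Q).L e = G.L e := by
  by_cases heQ : e ∈ Q
  · exact (restrict_L_of_mem heQ).trans (eq_L_of_mem_I_of_trivialEdge (hw e) he)
  · exact restrict_L_of_notMem heQ

end Restrict

section Verifies

variable {w : G.E → ℝ} {Q Tstar : Finset G.E}

/-- Otherwise a realization with `y` lighter than `f` makes exchanging `f` for `y` profitable. -/
theorem U_le_L_of_forall_isMST {T : Finset G.E} (hT : ∀ wf, G.Valid wf → G.IsMST wf T)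
    {f y : G.E} (hf : f ∈ T) (hyf : y ≠ f) (hcut : G.InCut T f y) : G.U f ≤ G.L y := by
  by_contra! h
  obtain ⟨m, hym, hmf⟩ := exists_between h
  obtain ⟨tf, htf, hmtf⟩ := exists_mem_I_gt hmf
  obtain ⟨ty, hty, htym⟩ := exists_mem_I_lt hym
  let wf := Function.update (Function.update G.pw f tf) y ty
  have hwf : G.Valid wf := by
    intro g
    by_cases hgy : g = y
    · subst hgy; simpa [wf] using hty
    by_cases hgf : g = f
    · subst hgf; simpa [wf, hgy] using htf
    simpa [wf, hgy, hgf] using valid_pw g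
  have := (hT wf hwf).le_of_inCut hf hcut
  simp only [wf, Function.update_self, Function.update_of_ne hyf.symm] at this
  linarith

theorem Verifies.isSpanningTree (hw : G.Valid w) (hver : G.Verifies w Q Tstar) :
    G.IsSpanningTree Tstar :=
  (hver w ⟨fun _ _ => rfl, hw⟩).1

/-- The realizations of `G.restrict w Q` are exactly the weightings compatible with the values
revealed by `Q`. -/
theorem Verifies.isMST_restrict (hw : G.Valid w) (hver : G.Verifies w Q Tstar) (wf : G.E → ℝ)
    (hwf : (G.restrict w Q).Valid wf) : (G.restrict w Q).IsMST wf Tstar := by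
  refine hver wf ⟨fun e he => eq_of_mem_restrict_I he (hwf e), fun e => ?_⟩
  by_cases he : e ∈ Q
  · exact eq_of_mem_restrict_I he (hwf e) ▸ hw e
  · exact restrict_I_of_notMem he ▸ hwf e

theorem Verifies.restrict_U_le_restrict_L (hw : G.Valid w) (hver : G.Verifies w Q Tstar)
    {f y : G.E} (hf : f ∈ Tstar) (hyf : y ≠ f) (hcut : G.InCut Tstar f y) :
    (G.restrict w Q).U f ≤ (G.restrict w Q).L y :=
  U_le_L_of_forall_isMST (hver.isMST_restrict hw) hf hyf hcut

theorem Verifies.mem_of_mem_lowerLimitTree (hw : G.Valid w) (hver : G.Verifies w Q Tstar)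
    {T : Finset G.E} (hT : G.IsLowerLimitTree T) (huniq : ∀ T', G.IsLowerLimitTree T' → T' = T)
    {x : G.E} (hx : x ∈ T) (hxL : (G.restrict w Q).L x = G.L x) : x ∈ Tstar := by
  by_contra hxT
  obtain ⟨h, hh, hhx, hcut, hcut'⟩ :=
    hT.isSpanningTree.exists_inCut_inCut (hver.isSpanningTree hw) hx hxT
  have hUL : (G.restrict w Q).U h ≤ G.L x :=
    hxL ▸ hver.restrict_U_le_restrict_L hw hh (Ne.symm hhx) hcut'
  have hLU : G.L h ≤ (G.restrict w Q).U h := (L_le_restrict_L hw).trans ((G.restrict w Q).LU h)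
  have htriv : G.TrivialEdge h :=
    trivialEdge_of_restrict_U_le_L hw (hUL.trans (hT.L_le_of_inCut hx hcut))
  have := hT.L_lt_of_inCut huniq hx hhx hcut htriv
  linarith

theorem Verifies.mem_of_mem_path (hw : G.Valid w) (hver : G.Verifies w Q Tstar)
    {T : Finset G.E} (hT : G.IsLowerLimitTree T) (huniq : ∀ T', G.IsLowerLimitTree T' → T' = T)
    {a b : G.V} {P Phat : Finset G.E} (hP : G.IsPathBetween P a b) (hPT : P ⊆ T) {e : G.E}
    (heP : e ∈ P) (hmax : ∀ e' ∈ P, G.U e' ≤ G.U e) (heQ : e ∉ Q) (hPhat : Phat ⊆ Tstar)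
    (hPhat_path : G.IsPathBetween Phat a b) : e ∈ Phat := by
  by_contra hePhat
  have heT : e ∈ Tstar :=
    hver.mem_of_mem_lowerLimitTree hw hT huniq (hPT heP) (restrict_L_of_notMem heQ)
  obtain ⟨u, v, hends⟩ := exists_ends_eq e
  let S := P.erase e ∪ Tstar.erase e
  have hab : G.ConnectsVia S a b := hPhat_path.connectsVia.mono fun g hg =>
    Finset.mem_union_right _ (Finset.mem_erase.mpr ⟨ne_of_mem_of_not_mem hg hePhat, hPhat hg⟩)
  have hsepP : ¬ G.ConnectsVia (P.erase e) a b := fun h =>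
    hP.not_connectsVia_erase_of_subset hT.isSpanningTree hPT heP
      (h.mono (Finset.erase_subset_erase e hPT))
  have huv : G.ConnectsVia S u v := hP.connectsVia.connectsVia_ends_of_not_connectsVia_erase
    heP hends hsepP Finset.subset_union_left hab
  obtain ⟨y, hyS, hcut⟩ := huv.exists_mem_inCut
    ((inCut_iff_of_ends hends).mp ((hver.isSpanningTree hw).inCut_self heT))
  obtain ⟨hye, hyP⟩ :=
    Finset.mem_erase.mp ((Finset.mem_union.mp hyS).resolve_right hcut.notMem_erase)
  have hUL := hver.restrict_U_le_restrict_L hw heT hye hcut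
  rw [restrict_U_of_notMem heQ] at hUL
  have htriv : G.TrivialEdge y := trivialEdge_of_U_le_restrict_L hw ((hmax y hyP).trans hUL)
  have hyT : y ∈ Tstar :=
    hver.mem_of_mem_lowerLimitTree hw hT huniq (hPT hyP) (restrict_L_of_trivialEdge hw htriv)
  exact hcut.notMem_erase (Finset.mem_erase.mpr ⟨hye, hyT⟩)

theorem Verifies.restrict_U_le_of_mem_path (hw : G.Valid w) (hver : G.Verifies w Q Tstar)
    {a b : G.V} {P Phat : Finset G.E} {c : ℝ} (hP : G.ConnectsVia P a b)
    (hmax : ∀ g ∈ P, G.U g ≤ c) (hPhat : Phat ⊆ Tstar) (hPhat_path : G.IsPathBetween Phat a b)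
    {e' : G.E} (he' : e' ∈ Phat) : (G.restrict w Q).U e' ≤ c := by
  obtain ⟨g, hgP, hcut⟩ := hP.exists_mem_inCut
    (hPhat_path.not_connectsVia_erase_of_subset (hver.isSpanningTree hw) hPhat he')
  by_cases hge' : g = e'
  · exact hge' ▸ (restrict_U_le_U hw).trans (hmax g hgP)
  calc (G.restrict w Q).U e' ≤ (G.restrict w Q).L g :=
        hver.restrict_U_le_restrict_L hw (hPhat he') hge' hcut
    _ ≤ (G.restrict w Q).U g := (G.restrict w Q).LU g
    _ ≤ G.U g := restrict_U_le_U hw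
    _ ≤ c := hmax g hgP

end Verifies

end UncGraph

/-- in an instance with unique `T_L = T_U`, let `Q` be a
feasible query set verifying the MST `T*`, let `P ⊆ T_L` be a path between `a`
and `b`, and let `e ∈ P` be the edge with the highest upper limit on `P`. If
`e ∉ Q`, then the (unique) path from `a` to `b` in `T*` contains `e`, and after
querying `Q` the edge `e` has the highest upper limit on that path. -/
theorem path_max_upper_limit_preserved
    (G : UncGraph) (w : G.E → ℝ) (hw : G.Valid w)
    (T : Finset G.E) (hT : G.UniqueLimitTrees T)
    (Q : Finset G.E) (Tstar : Finset G.E) (hver : G.Verifies w Q Tstar)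
    (a b : G.V) (P : Finset G.E) (hP : G.IsPathBetween P a b) (hPT : P ⊆ T)
    (e : G.E) (heP : e ∈ P) (hmax : ∀ e' ∈ P, G.U e' ≤ G.U e) (heQ : e ∉ Q) :
    ∀ Phat : Finset G.E, Phat ⊆ Tstar → G.IsPathBetween Phat a b →
      e ∈ Phat ∧ ∀ e' ∈ Phat, (G.restrict w Q).U e' ≤ (G.restrict w Q).U e := by
  intro Phat hPhat hPhat_path
  obtain ⟨hTL, -, huniqL, -⟩ := hT
  refine ⟨hver.mem_of_mem_path hw hTL huniqL hP hPT heP hmax heQ hPhat hPhat_path,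
    fun e' he' => ?_⟩
  rw [UncGraph.restrict_U_of_notMem heQ]
  exact hver.restrict_U_le_of_mem_path hw hP.connectsVia hmax hPhat hPhat_path he'
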